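/- arXiv:1504.06840 — 2 statements merged into one kernel-verified Lean document; each statement's English description precedes it below -/
import Mathlib

section
/- Let D be an ergodic r-out-regular directed multigraph of diameter at most d with stationary distribution π, and fix a vertex v. For each k ∈ {1,…,d}, the stationary measure satisfies π(v) ≥ ∑_{u: dist(u,v)=k} π(u)/r^k. Consequently, averaging over k, π(v) ≥ (1 - π(v))/(d·r^d). -/
open Finset

attribute [local instance] Classical.propDecidable

/-- There is a directed path of length `k` from `u` to `v` in the `r`-out
multigraph given by the out-edge function `f`. -/
def HasPath {V : Type*} {r : ℕ} (f : V → Fin r → V) (u v : V) (k : ℕ) : Prop :=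
  ∃ w : ℕ → V, w 0 = u ∧ w k = v ∧ ∀ i < k, ∃ j, f (w i) j = w (i + 1)

/-- `dist(u,v) = k`: there is a path of length `k` and none shorter. -/
def DistEq {V : Type*} {r : ℕ} (f : V → Fin r → V) (u v : V) (k : ℕ) : Prop :=
  HasPath f u v k ∧ ∀ k' < k, ¬ HasPath f u v k'

/-- `k`-step transition probabilities of the walk. -/
noncomputable def Pk {V : Type*} [Fintype V] [DecidableEq V] {r : ℕ} (f : V → Fin r → V) :
    ℕ → V → V → ℝ
  | 0, u, w => if u = w then 1 else 0
  | (k+1), u, w => ∑ x, Pk f k u x * (((univ.filter (fun j => f x j = w)).card : ℝ) / r)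

lemma Pk_nonneg {V : Type*} [Fintype V] [DecidableEq V] {r : ℕ} (f : V → Fin r → V)
    (k : ℕ) (u w : V) : 0 ≤ Pk f k u w := by
  induction k generalizing w with
  | zero => simp [Pk]; positivity
  | succ k ih =>
    simp only [Pk]
    refine Finset.sum_nonneg fun x _ => mul_nonneg (ih x) (by positivity)

lemma stat_iter {V : Type*} [Fintype V] [DecidableEq V] {r : ℕ} (f : V → Fin r → V)
    (π : V → ℝ)
    (hstat : ∀ w, π w = ∑ u, π u * ((univ.filter (fun j => f u j = w)).card : ℝ) / r)
    (k : ℕ) (w : V) : π w = ∑ u, π u * Pk f k u w := by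
  induction k generalizing w with
  | zero => simp [Pk]
  | succ k ih =>
    have h := hstat w
    calc π w = ∑ x, π x * (((univ.filter (fun j => f x j = w)).card : ℝ) / r) := by
          rw [h]; exact Finset.sum_congr rfl fun x _ => (mul_div_assoc _ _ _)
      _ = ∑ x, (∑ u, π u * Pk f k u x) * (((univ.filter (fun j => f x j = w)).card : ℝ) / r) := by
          exact Finset.sum_congr rfl fun x _ => by rw [← ih x]
      _ = ∑ u, π u * Pk f (k+1) u w := by
          simp only [Pk, Finset.sum_mul, Finset.mul_sum, mul_assoc]
          exact Finset.sum_comm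

lemma path_bound {V : Type*} [Fintype V] [DecidableEq V] {r : ℕ} (hr : 1 ≤ r)
    (f : V → Fin r → V) (u v : V) (k : ℕ) (h : HasPath f u v k) :
    ((1 : ℝ)/r)^k ≤ Pk f k u v := by
  induction k generalizing v with
  | zero =>
    obtain ⟨w, h0, hk, _⟩ := h
    simp [Pk, h0 ▸ hk]
  | succ k ih =>
    obtain ⟨w, h0, hk, hstep⟩ := h
    have h1 : HasPath f u (w k) k := ⟨w, h0, rfl, fun i hi => hstep i (hi.trans (Nat.lt_succ_self k))⟩
    obtain ⟨j, hj⟩ := hstep k (Nat.lt_succ_self k)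
    have hcard : (1 : ℝ) ≤ ((univ.filter (fun j' => f (w k) j' = v)).card : ℝ) := by
      have : 0 < (univ.filter (fun j' => f (w k) j' = v)).card :=
        Finset.card_pos.mpr ⟨j, Finset.mem_filter.mpr ⟨Finset.mem_univ _, hk ▸ hj⟩⟩
      exact_mod_cast this
    have hr0 : (0:ℝ) < r := by exact_mod_cast hr
    have key : ((1:ℝ)/r)^k * ((1:ℝ)/r) ≤
        Pk f k u (w k) * (((univ.filter (fun j' => f (w k) j' = v)).card : ℝ) / r) := by
      refine mul_le_mul (ih _ h1) ?_ (by positivity) (Pk_nonneg f k u (w k))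
      gcongr
    calc ((1:ℝ)/r)^(k+1) = ((1:ℝ)/r)^k * ((1:ℝ)/r) := by ring
      _ ≤ Pk f k u (w k) * (((univ.filter (fun j' => f (w k) j' = v)).card : ℝ) / r) := key
      _ ≤ Pk f (k+1) u v := by
          simp only [Pk]
          exact Finset.single_le_sum (f := fun x => Pk f k u x *
            (((univ.filter (fun j' => f x j' = v)).card : ℝ) / r))
            (fun x _ => mul_nonneg (Pk_nonneg f k u x) (by positivity)) (Finset.mem_univ (w k))

/-- Let `D` be an ergodic `r`-out-regular directed multigraph of diameter at
most `d`, with stationary distribution `π`, and fix a vertex `v`.  For each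
`k ∈ {1,…,d}`, `π v ≥ ∑_{u : dist(u,v)=k} π u / r^k`; consequently
`π v ≥ (1 - π v)/(d r^d)`. -/
theorem stationary_level_bound {V : Type*} [Fintype V] [DecidableEq V] [Nonempty V]
    (r : ℕ) (hr : 1 ≤ r) (f : V → Fin r → V) (π : V → ℝ)
    (hpos : ∀ w, 0 ≤ π w) (hsum : ∑ w, π w = 1)
    (hstat : ∀ w, π w = ∑ u, π u * ((univ.filter (fun j => f u j = w)).card : ℝ) / r)
    (huniq : ∀ π' : V → ℝ, (∀ w, 0 ≤ π' w) → ∑ w, π' w = 1 →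
      (∀ w, π' w = ∑ u, π' u * ((univ.filter (fun j => f u j = w)).card : ℝ) / r) →
      π' = π)
    (d : ℕ) (hd : 1 ≤ d) (hdiam : ∀ u w : V, ∃ k ≤ d, HasPath f u w k) (v : V) :
    (∀ k, 1 ≤ k → k ≤ d →
      ∑ u ∈ univ.filter (fun u => DistEq f u v k), π u / (r : ℝ) ^ k ≤ π v) ∧
    (1 - π v) / ((d : ℝ) * (r : ℝ) ^ d) ≤ π v := by
  have hr0 : (0:ℝ) < r := by exact_mod_cast hr
  -- Part 1
  have part1 : ∀ k, 1 ≤ k → k ≤ d →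
      ∑ u ∈ univ.filter (fun u => DistEq f u v k), π u / (r : ℝ) ^ k ≤ π v := by
    intro k _ _
    have h1 : π v = ∑ u, π u * Pk f k u v := stat_iter f π hstat k v
    have h2 : ∑ u ∈ univ.filter (fun u => DistEq f u v k), π u * Pk f k u v ≤
        ∑ u, π u * Pk f k u v :=
      Finset.sum_le_sum_of_subset_of_nonneg (Finset.filter_subset _ _)
        (fun u _ _ => mul_nonneg (hpos u) (Pk_nonneg f k u v))
    have h3 : ∑ u ∈ univ.filter (fun u => DistEq f u v k), π u / (r : ℝ) ^ k ≤
        ∑ u ∈ univ.filter (fun u => DistEq f u v k), π u * Pk f k u v := by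
      refine Finset.sum_le_sum fun u hu => ?_
      have hdu : DistEq f u v k := (Finset.mem_filter.mp hu).2
      have hb := path_bound hr f u v k hdu.1
      have : π u * ((1:ℝ)/r)^k ≤ π u * Pk f k u v :=
        mul_le_mul_of_nonneg_left hb (hpos u)
      calc π u / (r:ℝ)^k = π u * ((1:ℝ)/r)^k := by
            rw [div_pow, one_pow, div_eq_mul_inv, div_eq_mul_inv, one_mul]
        _ ≤ π u * Pk f k u v := this
    linarith [h2, h3, h1.ge, h1.le]
  refine ⟨part1, ?_⟩
  -- Part 2
  set S : ℕ → Finset V := fun k => univ.filter (fun u => DistEq f u v k) with hS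
  have hcover : univ.filter (fun u => u ≠ v) = (Finset.Icc 1 d).biUnion S := by
    ext u
    simp only [Finset.mem_filter, Finset.mem_univ, true_and, Finset.mem_biUnion,
      Finset.mem_Icc, hS]
    constructor
    · intro huv
      obtain ⟨k, hkd, hp⟩ := hdiam u v
      have hex : ∃ m, HasPath f u v m := ⟨k, hp⟩
      set m := Nat.find hex with hm
      have hmp : HasPath f u v m := Nat.find_spec hex
      have hmin : ∀ k' < m, ¬ HasPath f u v k' := fun k' hk' => Nat.find_min hex hk'
      have hm1 : 1 ≤ m := by
        rcases Nat.eq_zero_or_pos m with h0 | h1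
        · exfalso
          obtain ⟨w, hw0, hwm, _⟩ := hmp
          rw [h0] at hwm
          exact huv (hw0 ▸ hwm ▸ rfl)
        · exact h1
      exact ⟨m, ⟨hm1, (Nat.find_le hp).trans hkd⟩, hmp, hmin⟩
    · rintro ⟨k, ⟨hk1, _⟩, hp, hmin⟩ rfl
      exact hmin 0 hk1 ⟨fun _ => u, rfl, rfl, by omega⟩
  have hdisj : ∀ k1 ∈ Finset.Icc 1 d, ∀ k2 ∈ Finset.Icc 1 d, k1 ≠ k2 →
      Disjoint (S k1) (S k2) := by
    intro k1 _ k2 _ hne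
    refine Finset.disjoint_left.mpr fun u hu1 hu2 => ?_
    have h1 : DistEq f u v k1 := (Finset.mem_filter.mp hu1).2
    have h2 : DistEq f u v k2 := (Finset.mem_filter.mp hu2).2
    rcases hne.lt_or_gt with h | h
    · exact h2.2 k1 h h1.1
    · exact h1.2 k2 h h2.1
  have hsplit : ∑ u ∈ univ.filter (fun u => u ≠ v), π u = 1 - π v := by
    have := Finset.sum_filter_add_sum_filter_not Finset.univ (fun u => u ≠ v) π
    simp only [not_not] at this
    have hv : ∑ u ∈ univ.filter (fun u => u = v), π u = π v := by
      rw [Finset.filter_eq', if_pos (Finset.mem_univ v), Finset.sum_singleton]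
    rw [hsum] at this
    linarith
  have hsum2 : ∑ k ∈ Finset.Icc 1 d, ∑ u ∈ S k, π u = 1 - π v := by
    rw [← Finset.sum_biUnion hdisj, ← hcover, hsplit]
  have hbound : ∀ k ∈ Finset.Icc 1 d, (∑ u ∈ S k, π u) / (r:ℝ)^d ≤ π v := by
    intro k hk
    obtain ⟨hk1, hkd⟩ := Finset.mem_Icc.mp hk
    have h1 : (∑ u ∈ S k, π u) / (r:ℝ)^d ≤ ∑ u ∈ S k, π u / (r:ℝ)^k := by
      rw [Finset.sum_div]
      refine Finset.sum_le_sum fun u _ => ?_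
      have hle : (r:ℝ)^k ≤ (r:ℝ)^d := pow_le_pow_right₀ (by exact_mod_cast hr) hkd
      exact div_le_div_of_nonneg_left (hpos u) (by positivity) hle
    exact h1.trans (part1 k hk1 hkd)
  have hfin : (1 - π v) / (r:ℝ)^d ≤ (d:ℝ) * π v := by
    have := Finset.sum_le_sum hbound
    rw [Finset.sum_const, Nat.card_Icc] at this
    simp only [Nat.add_sub_cancel, nsmul_eq_mul] at this
    calc (1 - π v) / (r:ℝ)^d = ∑ k ∈ Finset.Icc 1 d, (∑ u ∈ S k, π u) / (r:ℝ)^d := by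
          rw [← Finset.sum_div, hsum2]
      _ ≤ (d:ℝ) * π v := this
  have hd0 : (0:ℝ) < d := by exact_mod_cast hd
  rw [div_le_iff₀ (by positivity)]
  rw [div_le_iff₀ (by positivity)] at hfin
  nlinarith [hfin]
end

section
/- Let (Z_k)_{k≥0} be a Galton–Watson process with some offspring distribution whose survival probability is p > 0. For integers 0 ≤ j < k and a, b ∈ ℕ, conditional on Z_j = a, the probability that Z_k < b is at most P(Bin(a, p) < b). -/
/-- Distribution of the sum of `a` iid copies of the offspring distribution `ξ`. -/
noncomputable def sumIid (ξ : PMF ℕ) : ℕ → PMF ℕ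
  | 0 => PMF.pure 0
  | a + 1 => (sumIid ξ a).bind (fun y => ξ.map (fun x => x + y))

/-- `m` steps of the Galton–Watson generation-size chain started from `a`. -/
noncomputable def gwIter (ξ : PMF ℕ) : ℕ → ℕ → PMF ℕ
  | 0 => fun a => PMF.pure a
  | m + 1 => fun a => (sumIid ξ a).bind (gwIter ξ m)

/-- The distribution of `Z_k`, generation `k` of a Galton–Watson process with
offspring distribution `ξ` started from one individual. -/
noncomputable def gwGen (ξ : PMF ℕ) (k : ℕ) : PMF ℕ := gwIter ξ k 1

/-- `binomPr N k p` is the probability that a `Bin(N,p)` random variable equals `k`. -/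
noncomputable def binomPr (N k : ℕ) (p : ℝ) : ℝ :=
  (N.choose k : ℝ) * p ^ k * (1 - p) ^ (N - k)

/- ### Auxiliary material -/

open scoped ENNReal

noncomputable def conv (μ ν : PMF ℕ) : PMF ℕ := μ.bind (fun y => ν.map (fun x => x + y))

lemma conv_comm (μ ν : PMF ℕ) : conv μ ν = conv ν μ := by
  simp only [conv, PMF.map, Function.comp]
  rw [PMF.bind_comm]
  congr 1; funext x; congr 1; funext y; simp [Nat.add_comm]

lemma conv_pure_left (μ : PMF ℕ) (x : ℕ) :
    conv (PMF.pure x) μ = μ.map (fun v => v + x) := by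
  simp [conv]

lemma bind_conv (μ ν : PMF ℕ) (f : ℕ → PMF ℕ)
    (hf : ∀ x y, f (x + y) = conv (f x) (f y)) :
    (conv μ ν).bind f = conv (μ.bind f) (ν.bind f) := by
  have h1 : (conv μ ν).bind f = μ.bind (fun y => ν.bind (fun x => f (x + y))) := by
    simp only [conv, PMF.bind_bind, PMF.bind_map]; rfl
  have h2 : conv (μ.bind f) (ν.bind f)
      = μ.bind (fun y => ν.bind (fun x => conv (f y) (f x))) := by
    simp only [conv, PMF.bind_bind, PMF.map_bind]
    congr 1; funext y
    rw [PMF.bind_comm]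
  rw [h1, h2]
  congr 1; funext y; congr 1; funext x
  rw [hf, conv_comm]

lemma conv_assoc (μ ν ρ : PMF ℕ) : conv (conv μ ν) ρ = conv μ (conv ν ρ) := by
  simp only [conv, PMF.bind_bind, PMF.bind_map, PMF.map_bind, PMF.map_comp]
  congr 1; funext y; congr 1; funext x
  simp only [Function.comp_def]
  congr 1; funext w; simp [Nat.add_assoc]

lemma conv_pure_zero_right (μ : PMF ℕ) : conv μ (PMF.pure 0) = μ := by
  simp [conv, PMF.pure_map, PMF.bind_pure]

lemma sumIid_add (ξ : PMF ℕ) (a b : ℕ) :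
    sumIid ξ (a + b) = conv (sumIid ξ a) (sumIid ξ b) := by
  induction b with
  | zero => simp [sumIid, conv_pure_zero_right]
  | succ b ih =>
    rw [Nat.add_succ]
    show conv (sumIid ξ (a + b)) ξ = conv (sumIid ξ a) (conv (sumIid ξ b) ξ)
    rw [ih, conv_assoc]

lemma gwIter_add (ξ : PMF ℕ) (m x y : ℕ) :
    gwIter ξ m (x + y) = conv (gwIter ξ m x) (gwIter ξ m y) := by
  induction m generalizing x y with
  | zero =>
    show PMF.pure (x + y) = conv (PMF.pure x) (PMF.pure y)
    simp [conv, PMF.pure_map, PMF.pure_bind, Nat.add_comm]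
  | succ m ih =>
    show (sumIid ξ (x + y)).bind (gwIter ξ m) = _
    rw [sumIid_add, bind_conv _ _ _ (fun u v => ih u v)]
    rfl

lemma gwIter_zero (ξ : PMF ℕ) (m : ℕ) : gwIter ξ m 0 = PMF.pure 0 := by
  induction m with
  | zero => rfl
  | succ m ih => simp [gwIter, sumIid, ih]

/-- ENNReal CDF -/
noncomputable def Cdf (μ : PMF ℕ) (b : ℕ) : ℝ≥0∞ := ∑' z, if z < b then μ z else 0

lemma Cdf_le_one (μ : PMF ℕ) (b : ℕ) : Cdf μ b ≤ 1 := by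
  rw [← μ.tsum_coe]
  exact ENNReal.tsum_le_tsum (fun z => by split <;> simp)

lemma Cdf_ne_top (μ : PMF ℕ) (b : ℕ) : Cdf μ b ≠ ⊤ :=
  ne_top_of_le_ne_top ENNReal.one_ne_top (Cdf_le_one μ b)

lemma Cdf_mono (μ : PMF ℕ) {b c : ℕ} (h : b ≤ c) : Cdf μ b ≤ Cdf μ c := by
  refine ENNReal.tsum_le_tsum (fun z => ?_)
  by_cases hz : z < b
  · simp [hz, lt_of_lt_of_le hz h]
  · simp [hz]

lemma Cdf_pure_zero (b : ℕ) : Cdf (PMF.pure 0) b = if 0 < b then 1 else 0 := by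
  rw [Cdf, tsum_eq_single 0 (fun z hz => by simp [PMF.pure_apply, hz])]
  simp

set_option maxHeartbeats 1000000 in
lemma Cdf_conv_le (μ ν : PMF ℕ) (b : ℕ) :
    Cdf (conv μ ν) b ≤ Cdf μ b * ν 0 + Cdf μ (b - 1) * (1 - ν 0) := by
  have key : ∀ y x : ℕ, (∑' z : ℕ, if z < b then (if z = x + y then μ y * ν x else 0) else 0)
      = if x + y < b then μ y * ν x else 0 := by
    intro y x
    rw [tsum_eq_single (x + y) (fun z hz => by by_cases h : z < b <;> simp [h, hz])]
    simp
  have h1 : Cdf (conv μ ν) b = ∑' y, ∑' x, if x + y < b then μ y * ν x else 0 := by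
    have hz : ∀ z, (if z < b then (conv μ ν) z else 0)
        = ∑' y, ∑' x, if z < b then (if z = x + y then μ y * ν x else 0) else 0 := by
      intro z
      by_cases h : z < b
      · simp only [h, if_true, conv, PMF.bind_apply, PMF.map_apply]
        refine tsum_congr fun y => ?_
        rw [← ENNReal.tsum_mul_left]
        refine tsum_congr fun x => ?_
        by_cases he : z = x + y <;> simp [he]
      · simp [h]
    rw [Cdf, tsum_congr hz]
    exact ENNReal.tsum_comm.trans (tsum_congr fun y =>
      ENNReal.tsum_comm.trans (tsum_congr fun x => key y x))
  have tail : ∑' x : ℕ, ν (x + 1) = 1 - ν 0 := by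
    have h := tsum_eq_zero_add' (f := fun x : ℕ => ν x) ENNReal.summable
    rw [ν.tsum_coe] at h
    exact ENNReal.eq_sub_of_add_eq (ν.apply_ne_top 0) (by rw [add_comm]; exact h.symm)
  have hsplit : ∀ y : ℕ, (∑' x, if x + y < b then μ y * ν x else 0)
      ≤ (if y < b then μ y else 0) * ν 0 + (if y < b - 1 then μ y else 0) * (1 - ν 0) := by
    intro y
    rw [tsum_eq_zero_add' ENNReal.summable]
    have t1 : (if 0 + y < b then μ y * ν 0 else 0) = (if y < b then μ y else 0) * ν 0 := by
      by_cases h : y < b <;> simp [h]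
    have t2 : (∑' x, if x + 1 + y < b then μ y * ν (x + 1) else 0)
        ≤ (if y < b - 1 then μ y else 0) * (1 - ν 0) := by
      calc (∑' x, if x + 1 + y < b then μ y * ν (x + 1) else 0)
          ≤ ∑' x, (if y < b - 1 then μ y * ν (x + 1) else 0) := by
            refine ENNReal.tsum_le_tsum fun x => ?_
            by_cases h : x + 1 + y < b
            · have h2 : y < b - 1 := by omega
              simp [h, h2]
            · simp [h]
        _ = (if y < b - 1 then μ y else 0) * (1 - ν 0) := by
            by_cases h : y < b - 1 <;> simp [h, ENNReal.tsum_mul_left, tail]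
    exact add_le_add (le_of_eq t1) t2
  rw [h1]
  calc (∑' y, ∑' x, if x + y < b then μ y * ν x else 0)
      ≤ ∑' y, ((if y < b then μ y else 0) * ν 0 + (if y < b - 1 then μ y else 0) * (1 - ν 0)) :=
        ENNReal.tsum_le_tsum hsplit
    _ = Cdf μ b * ν 0 + Cdf μ (b - 1) * (1 - ν 0) := by
        rw [ENNReal.tsum_add, ENNReal.tsum_mul_right, ENNReal.tsum_mul_right]; rfl

lemma binomPr_succ_succ (a i : ℕ) (p : ℝ) :
    binomPr (a + 1) (i + 1) p = (1 - p) * binomPr a (i + 1) p + p * binomPr a i p := by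
  unfold binomPr
  rcases le_or_gt (i + 1) a with h | h
  · have h1 : a - (i + 1) + 1 = a - i := by omega
    have h2 : a + 1 - (i + 1) = a - i := by omega
    rw [Nat.choose_succ_succ a i, h2, ← h1]
    push_cast
    ring
  · have h0 : a.choose (i + 1) = 0 := Nat.choose_eq_zero_of_lt (by omega)
    have h2 : a + 1 - (i + 1) = a - i := by omega
    rw [Nat.choose_succ_succ a i, h0, h2]
    push_cast
    ring

lemma binomPr_succ_zero (a : ℕ) (p : ℝ) :
    binomPr (a + 1) 0 p = (1 - p) * binomPr a 0 p := by
  simp [binomPr]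
  ring

lemma binom_step (a b : ℕ) (p : ℝ) :
    ∑ i ∈ Finset.range b, binomPr (a + 1) i p =
      (1 - p) * ∑ i ∈ Finset.range b, binomPr a i p
      + p * ∑ i ∈ Finset.range (b - 1), binomPr a i p := by
  cases b with
  | zero => simp
  | succ c =>
    rw [Finset.sum_range_succ' (fun i => binomPr (a + 1) i p) c,
        Finset.sum_range_succ' (fun i => binomPr a i p) c]
    simp only [binomPr_succ_succ, binomPr_succ_zero, Nat.add_sub_cancel]
    rw [Finset.sum_add_distrib, ← Finset.mul_sum, ← Finset.mul_sum]
    ring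

lemma main_ineq (ξ : PMF ℕ) (p : ℝ) (hp0 : 0 ≤ p) (m : ℕ)
    (hq : p ≤ 1 - (gwGen ξ m 0).toReal) (a b : ℕ) :
    (Cdf (gwIter ξ m a) b).toReal ≤ ∑ i ∈ Finset.range b, binomPr a i p := by
  have hν0nn : (0:ℝ) ≤ (gwGen ξ m 0).toReal := ENNReal.toReal_nonneg
  have hν0le : (gwGen ξ m 0).toReal ≤ 1 := by
    have := ENNReal.toReal_mono ENNReal.one_ne_top ((gwGen ξ m).coe_le_one 0)
    simpa using this
  induction a generalizing b with
  | zero =>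
    rw [gwIter_zero, Cdf_pure_zero]
    cases b with
    | zero => simp
    | succ c =>
      rw [Finset.sum_eq_single 0 (fun i _ hi => ?_) (fun h => absurd (Finset.mem_range.mpr (Nat.succ_pos c)) h)]
      · simp [binomPr]
      · obtain ⟨n, rfl⟩ := Nat.exists_eq_succ_of_ne_zero hi
        simp [binomPr, Nat.choose]
  | succ a ih =>
    have hconv : gwIter ξ m (a + 1) = conv (gwIter ξ m a) (gwGen ξ m) :=
      gwIter_add ξ m a 1
    have hENN : Cdf (gwIter ξ m (a + 1)) b ≤
        Cdf (gwIter ξ m a) b * gwGen ξ m 0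
        + Cdf (gwIter ξ m a) (b - 1) * (1 - gwGen ξ m 0) := by
      rw [hconv]; exact Cdf_conv_le _ _ b
    have hfin : Cdf (gwIter ξ m a) b * gwGen ξ m 0
        + Cdf (gwIter ξ m a) (b - 1) * (1 - gwGen ξ m 0) ≠ ⊤ := by
      apply ENNReal.add_ne_top.mpr
      constructor
      · exact ENNReal.mul_ne_top (Cdf_ne_top _ _) ((gwGen ξ m).apply_ne_top 0)
      · exact ENNReal.mul_ne_top (Cdf_ne_top _ _)
          (ne_top_of_le_ne_top ENNReal.one_ne_top tsub_le_self)
    have hR := ENNReal.toReal_mono hfin hENN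
    set ν0 : ℝ := (gwGen ξ m 0).toReal with hν0
    have hsub : ((1 : ℝ≥0∞) - gwGen ξ m 0).toReal = 1 - ν0 := by
      rw [ENNReal.toReal_sub_of_le ((gwGen ξ m).coe_le_one 0) ENNReal.one_ne_top,
        ENNReal.toReal_one]
    rw [ENNReal.toReal_add (ENNReal.mul_ne_top (Cdf_ne_top _ _) ((gwGen ξ m).apply_ne_top 0))
        (ENNReal.mul_ne_top (Cdf_ne_top _ _) (ne_top_of_le_ne_top ENNReal.one_ne_top tsub_le_self)),
      ENNReal.toReal_mul, ENNReal.toReal_mul, hsub] at hR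
    set Fb := (Cdf (gwIter ξ m a) b).toReal with hFb
    set Fb1 := (Cdf (gwIter ξ m a) (b - 1)).toReal with hFb1
    have hmono : Fb1 ≤ Fb :=
      ENNReal.toReal_mono (Cdf_ne_top _ _) (Cdf_mono _ (Nat.sub_le b 1))
    have h1 := ih b
    have h2 := ih (b - 1)
    rw [binom_step]
    have h1p : 0 ≤ 1 - p := by linarith
    nlinarith [mul_nonneg (by linarith : (0:ℝ) ≤ 1 - ν0 - p) (by linarith : (0:ℝ) ≤ Fb - Fb1),
      mul_nonneg h1p (by linarith : (0:ℝ) ≤ (∑ i ∈ Finset.range b, binomPr a i p) - Fb),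
      mul_nonneg hp0 (by linarith : (0:ℝ) ≤ (∑ i ∈ Finset.range (b - 1), binomPr a i p) - Fb1)]

/-- Let `(Z_k)` be a Galton–Watson process with survival probability `p > 0`.
For `0 ≤ j < k` and `a b : ℕ`, conditional on `Z_j = a`, the probability that
`Z_k < b` is at most `P(Bin(a,p) < b)`.  The conditional probability is computed
from the joint law of `(Z_j, Z_k)`. -/
theorem gw_conditional_binomial (ξ : PMF ℕ) (p : ℝ)
    (hp : p = 1 - (⨆ k : ℕ, gwGen ξ k 0).toReal) (hppos : 0 < p)
    (j k a b : ℕ) (hjk : j < k) (hcond : gwGen ξ j a ≠ 0) :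
    ((∑' z : ℕ, if z < b then
        ((gwGen ξ j).bind (fun a' => (gwIter ξ (k - j) a').map (Prod.mk a'))) (a, z)
      else 0) / gwGen ξ j a).toReal ≤
      ∑ m ∈ Finset.range b, binomPr a m p := by
  have hJ : ∀ z, ((gwGen ξ j).bind (fun a' => (gwIter ξ (k - j) a').map (Prod.mk a'))) (a, z)
      = gwGen ξ j a * gwIter ξ (k - j) a z := by
    intro z
    rw [PMF.bind_apply]
    refine (tsum_eq_single a fun a' ha' => ?_).trans ?_
    · rw [PMF.map_apply]
      refine mul_eq_zero.mpr (Or.inr ?_)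
      exact ENNReal.tsum_eq_zero.mpr fun w => if_neg (fun h => ha' (by cases h; rfl))
    · rw [PMF.map_apply]
      congr 1
      refine (tsum_eq_single z fun w hw => ?_).trans ?_
      · exact if_neg (fun h => hw (by cases h; rfl))
      · exact if_pos rfl
  have hnum : (∑' z : ℕ, if z < b then
      ((gwGen ξ j).bind (fun a' => (gwIter ξ (k - j) a').map (Prod.mk a'))) (a, z) else 0)
      = gwGen ξ j a * Cdf (gwIter ξ (k - j) a) b := by
    rw [Cdf, ← ENNReal.tsum_mul_left]
    refine tsum_congr fun z => ?_
    rw [hJ z]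
    by_cases h : z < b <;> simp [h]
  rw [hnum, mul_comm, mul_div_assoc,
    ENNReal.div_self hcond ((gwGen ξ j).apply_ne_top a), mul_one]
  apply main_ineq ξ p (le_of_lt hppos) (k - j)
  have hsup_le : (⨆ n : ℕ, gwGen ξ n 0) ≤ 1 := iSup_le fun n => (gwGen ξ n).coe_le_one 0
  have hsup_ne : (⨆ n : ℕ, gwGen ξ n 0) ≠ ⊤ := ne_top_of_le_ne_top ENNReal.one_ne_top hsup_le
  have hle : gwGen ξ (k - j) 0 ≤ ⨆ n : ℕ, gwGen ξ n 0 := le_iSup (fun n => gwGen ξ n 0) (k - j)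
  have h := ENNReal.toReal_mono hsup_ne hle
  rw [hp]
  linarith
end
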